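/- Let f be holomorphic and nowhere zero on a punctured disk Δ* around 0. If the logarithmic-derivative equation h'/h = 1/f admits a solution h that is meromorphic at 0 (and not identically zero), then f extends meromorphically to 0. -/

import Mathlib

open Filter Topology

lemma setOf_norm_pos_lt_mem_nhdsNE {E : Type*} [NormedAddCommGroup E] {r : ℝ} (hr : 0 < r) :
    {z : E | 0 < ‖z‖ ∧ ‖z‖ < r} ∈ 𝓝[≠] (0 : E) := by
  filter_upwards [inter_mem_nhdsWithin _ (Metric.ball_mem_nhds 0 hr), self_mem_nhdsWithin]
    with z hz hz0
  exact ⟨norm_pos_iff.mpr hz0, mem_ball_zero_iff.mp hz.2⟩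

/-- Inverting `h' / h = 1 / f` gives `f = h / h'`, and `h'` is meromorphic along with `h`. -/
theorem MeromorphicAt.of_deriv_div_eq_one_div {𝕜 : Type*} [NontriviallyNormedField 𝕜]
    [CompleteSpace 𝕜] {f h : 𝕜 → 𝕜} {x : 𝕜} (hh : MeromorphicAt h x)
    (heq : ∀ᶠ z in 𝓝[≠] x, deriv h z / h z = 1 / f z) : MeromorphicAt f x :=
  (hh.div hh.deriv).congr <| heq.mono fun z hz => by
    rw [Pi.div_apply, ← inv_div, hz, one_div, inv_inv]

theorem stmt2_general (f h : ℂ → ℂ)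
    (hh : MeromorphicAt h 0)
    (heq : ∀ z ∈ {z : ℂ | 0 < ‖z‖ ∧ ‖z‖ < 1}, deriv h z / h z = 1 / f z) :
    MeromorphicAt f 0 :=
  hh.of_deriv_div_eq_one_div <|
    eventually_of_mem (setOf_norm_pos_lt_mem_nhdsNE one_pos) heq

/-- If `f` is holomorphic and nowhere zero on the punctured disk, and the equation
`h'/h = 1/f` admits a solution `h` meromorphic at `0` and not identically zero,
then `f` extends meromorphically to `0`. -/
theorem stmt2 (f h : ℂ → ℂ)
    (hf : DifferentiableOn ℂ f {z : ℂ | 0 < ‖z‖ ∧ ‖z‖ < 1})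
    (hf0 : ∀ z ∈ {z : ℂ | 0 < ‖z‖ ∧ ‖z‖ < 1}, f z ≠ 0)
    (hh : MeromorphicAt h 0)
    (hh0 : ∃ᶠ z in nhdsWithin 0 {(0 : ℂ)}ᶜ, h z ≠ 0)
    (heq : ∀ z ∈ {z : ℂ | 0 < ‖z‖ ∧ ‖z‖ < 1}, deriv h z / h z = 1 / f z) :
    MeromorphicAt f 0 :=
  stmt2_general f h hh heq
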